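/- Let c > 0, α ∈ (0,1), h > 0, and set φ_k = (α/(2ke))·((c^(−α)+h)/h)^(1/α) and τ_k = c·φ_k²·exp(2W(2k/(φ_k α))). Then τ_k → +∞ as k → ∞; moreover x_k := (c/τ_k)^(1/2) = (φ_k·exp(W(2k/(φ_k α))))^(−1) → 0 and k·x_k → ∞ as k → ∞. -/

import Mathlib

/-!
Substituting φ_k into the Lambert argument gives y_k = 2k/(φ_k α) = D k² for a constant D > 0,
and W(y) e^{W(y)} = y turns x_k = (φ_k e^{W(y_k)})⁻¹ into α W(D k²) / (2k). Since
log y / 2 ≤ W(y) ≤ 1 + log y for y ≥ 1, the numerator grows like log k: hence k x_k → ∞,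
x_k → 0, and τ_k = c / x_k² → ∞.
-/

open Filter Real Topology

lemma log_le_two_mul_of_mul_exp_eq {w y : ℝ} (hw : 0 < w) (h : w * exp w = y) :
    log y ≤ 2 * w := by
  have hy : 0 < y := h ▸ by positivity
  have hy_le : y ≤ exp (2 * w) :=
    calc y = w * exp w := h.symm
      _ ≤ exp w * exp w := by gcongr; linarith [add_one_le_exp w]
      _ = exp (2 * w) := by rw [two_mul, exp_add]
  simpa using log_le_log hy hy_le

lemma le_one_add_log_of_mul_exp_eq {w y : ℝ} (h : w * exp w = y) (hy : 1 ≤ y) :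
    w ≤ 1 + log y := by
  rcases le_or_gt w 1 with hw | hw
  · linarith [log_nonneg hy]
  · have hexp_le : exp w ≤ y := h ▸ le_mul_of_one_le_left (exp_pos w).le hw.le
    linarith [(le_log_iff_exp_le (by linarith)).2 hexp_le]

lemma rpow_half_div_mul_sq {c a : ℝ} (hc : c ≠ 0) (ha : 0 ≤ a) :
    (c / (c * a ^ 2)) ^ (1 / 2 : ℝ) = a⁻¹ := by
  rw [div_mul_cancel_left₀ hc, ← inv_pow, ← sqrt_eq_rpow, sqrt_sq (inv_nonneg.2 ha)]

lemma tendsto_const_mul_natCast_sq_atTop {D : ℝ} (hD : 0 < D) :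
    Tendsto (fun k : ℕ => D * (k : ℝ) ^ 2) atTop atTop :=
  ((tendsto_pow_atTop two_ne_zero).comp tendsto_natCast_atTop_atTop).const_mul_atTop hD

section Lambert

variable {W : ℝ → ℝ}

lemma inv_mul_exp_lambert_eq (hW : ∀ y, 0 < y → W y * exp (W y) = y ∧ 0 < W y)
    {p α t : ℝ} (hp : 0 < p) (hα : 0 < α) (ht : 0 < t) :
    (p * exp (W (2 * t / (p * α))))⁻¹ = α / 2 * (W (2 * t / (p * α)) / t) := by
  obtain ⟨hWy, hW_pos⟩ := hW (2 * t / (p * α)) (by positivity)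
  have hexp : exp (W (2 * t / (p * α))) = 2 * t / (p * α) / W (2 * t / (p * α)) := by
    rw [eq_div_iff hW_pos.ne', mul_comm, hWy]
  rw [hexp]
  field_simp

lemma tendsto_lambert_atTop (hW : ∀ y, 0 < y → W y * exp (W y) = y ∧ 0 < W y) :
    Tendsto W atTop atTop := by
  refine tendsto_atTop_mono' _ ?_ (tendsto_log_atTop.atTop_div_const two_pos)
  filter_upwards [eventually_gt_atTop 0] with y hy
  obtain ⟨hWy, hWpos⟩ := hW y hy
  linarith [log_le_two_mul_of_mul_exp_eq hWpos hWy]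

lemma tendsto_lambert_const_mul_sq_atTop
    (hW : ∀ y, 0 < y → W y * exp (W y) = y ∧ 0 < W y) {D : ℝ} (hD : 0 < D) :
    Tendsto (fun k : ℕ => W (D * (k : ℝ) ^ 2)) atTop atTop :=
  (tendsto_lambert_atTop hW).comp (tendsto_const_mul_natCast_sq_atTop hD)

lemma tendsto_lambert_const_mul_sq_div (hW : ∀ y, 0 < y → W y * exp (W y) = y ∧ 0 < W y)
    {D : ℝ} (hD : 0 < D) :
    Tendsto (fun k : ℕ => W (D * (k : ℝ) ^ 2) / k) atTop (𝓝 0) := by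
  have hlog_div : Tendsto (fun k : ℕ => log k / (k : ℝ)) atTop (𝓝 0) := by
    simpa [Function.comp_def] using
      (tendsto_pow_log_div_mul_add_atTop 1 0 1 one_ne_zero).comp tendsto_natCast_atTop_atTop
  have hinv : Tendsto (fun k : ℕ => (k : ℝ)⁻¹) atTop (𝓝 0) :=
    tendsto_inv_atTop_zero.comp tendsto_natCast_atTop_atTop
  have hbound :
      Tendsto (fun k : ℕ => (1 + log D) * (k : ℝ)⁻¹ + 2 * (log k / k)) atTop (𝓝 0) := by
    simpa using (hinv.const_mul (1 + log D)).add (hlog_div.const_mul 2)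
  refine squeeze_zero' ?_ ?_ hbound
  · filter_upwards [eventually_gt_atTop 0] with k hk
    have hk : (0 : ℝ) < k := by exact_mod_cast hk
    exact div_nonneg (hW _ (by positivity)).2.le hk.le
  · filter_upwards [eventually_gt_atTop 0,
      (tendsto_const_mul_natCast_sq_atTop hD).eventually_ge_atTop 1] with k hk hDk
    have hk : (0 : ℝ) < k := by exact_mod_cast hk
    have hW_le := le_one_add_log_of_mul_exp_eq (hW _ (by positivity)).1 hDk
    rw [log_mul hD.ne' (by positivity), log_pow, Nat.cast_ofNat] at hW_le
    calc W (D * k ^ 2) / k ≤ (1 + (log D + 2 * log k)) / k := by gcongr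
      _ = (1 + log D) * (k : ℝ)⁻¹ + 2 * (log k / k) := by ring

end Lambert

lemma tendsto_const_div_sq_atTop {ι : Type*} {l : Filter ι} {c : ℝ} {x : ι → ℝ}
    (hc : 0 < c) (hx : Tendsto x l (𝓝 0)) (hx_pos : ∀ᶠ i in l, 0 < x i) :
    Tendsto (fun i => c / x i ^ 2) l atTop := by
  have hsq : Tendsto (fun i => x i ^ 2) l (𝓝[>] 0) :=
    tendsto_nhdsWithin_of_tendsto_nhds_of_eventually_within _ (by simpa using hx.pow 2)
      (hx_pos.mono fun i hi => pow_pos hi 2)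
  simpa [div_eq_mul_inv] using (tendsto_inv_nhdsGT_zero.comp hsq).const_mul_atTop hc

theorem tau_k_asymptotics_general (c h α : ℝ) (hc : 0 < c) (hh : 0 < h)
    (hα : 0 < α)
    (W : ℝ → ℝ) (hW : ∀ y : ℝ, 0 < y → W y * Real.exp (W y) = y ∧ 0 < W y)
    (φ τ x : ℕ → ℝ)
    (hφ : ∀ k : ℕ, φ k = (α / (2 * (k : ℝ) * Real.exp 1)) * ((c ^ (-α) + h) / h) ^ (1 / α))
    (hτ : ∀ k : ℕ, τ k = c * (φ k) ^ 2 * Real.exp (2 * W (2 * (k : ℝ) / (φ k * α))))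
    (hx : ∀ k : ℕ, x k = (c / τ k) ^ ((1 : ℝ)/2)) :
    Tendsto τ atTop atTop ∧
    (∀ k : ℕ, 1 ≤ k →
      x k = (φ k * Real.exp (W (2 * (k : ℝ) / (φ k * α))))⁻¹) ∧
    Tendsto x atTop (nhds 0) ∧
    Tendsto (fun k : ℕ => (k : ℝ) * x k) atTop atTop := by
  set M := ((c ^ (-α) + h) / h) ^ (1 / α)
  have hM : 0 < M := rpow_pos_of_pos (div_pos (by positivity) hh) _
  set D := 4 * exp 1 / (α ^ 2 * M)
  have hD : 0 < D := by positivity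
  have hφ_pos : ∀ k : ℕ, 1 ≤ k → 0 < φ k := fun k hk => by
    have : (0 : ℝ) < k := by exact_mod_cast hk
    rw [hφ]; positivity
  have harg : ∀ k : ℕ, 1 ≤ k → 2 * (k : ℝ) / (φ k * α) = D * (k : ℝ) ^ 2 :=
    fun k hk => by
      have : (0 : ℝ) < k := by exact_mod_cast hk
      rw [hφ]; simp only [D]; field_simp; ring
  have hx_eq : ∀ k : ℕ, 1 ≤ k → x k = (φ k * exp (W (2 * (k : ℝ) / (φ k * α))))⁻¹ :=
    fun k hk => by
      have := hφ_pos k hk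
      rw [hx, hτ, mul_assoc, ← rpow_half_div_mul_sq hc.ne' (by positivity), mul_pow,
        ← exp_nat_mul, Nat.cast_ofNat]
  have hx_W : x =ᶠ[atTop] fun k => α / 2 * (W (D * (k : ℝ) ^ 2) / k) := by
    filter_upwards [eventually_ge_atTop 1] with k hk
    rw [hx_eq k hk, inv_mul_exp_lambert_eq hW (hφ_pos k hk) hα (by exact_mod_cast hk),
      harg k hk]
  have hx_zero : Tendsto x atTop (𝓝 0) := by
    simpa using ((tendsto_lambert_const_mul_sq_div hW hD).const_mul (α / 2)).congr' hx_W.symm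
  have hx_pos : ∀ᶠ k in atTop, 0 < x k := by
    filter_upwards [eventually_ge_atTop 1] with k hk
    rw [hx_eq k hk]; have := hφ_pos k hk; positivity
  have hτ_eq : ∀ k : ℕ, 1 ≤ k → τ k = c / x k ^ 2 := fun k hk => by
    rw [hx_eq k hk, hτ, inv_pow, div_inv_eq_mul, mul_pow, ← exp_nat_mul, Nat.cast_ofNat]; ring
  refine ⟨(tendsto_const_div_sq_atTop hc hx_zero hx_pos).congr' ?_, hx_eq, hx_zero, ?_⟩
  · filter_upwards [eventually_ge_atTop 1] with k hk using (hτ_eq k hk).symm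
  · refine ((tendsto_lambert_const_mul_sq_atTop hW hD).const_mul_atTop (half_pos hα)).congr' ?_
    filter_upwards [hx_W, eventually_gt_atTop 0] with k hxk hk
    rw [hxk]; field_simp

/-- The parameters τ_k tend to infinity; x_k = (c/τ_k)^(1/2) equals
(φ_k exp(W(2k/(φ_k α))))⁻¹, tends to 0, and k·x_k → ∞. -/
theorem tau_k_asymptotics (c h α : ℝ) (hc : 0 < c) (hh : 0 < h)
    (hα : 0 < α) (hα1 : α < 1)
    (W : ℝ → ℝ) (hW : ∀ y : ℝ, 0 < y → W y * Real.exp (W y) = y ∧ 0 < W y)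
    (φ τ x : ℕ → ℝ)
    (hφ : ∀ k : ℕ, φ k = (α / (2 * (k : ℝ) * Real.exp 1)) * ((c ^ (-α) + h) / h) ^ (1 / α))
    (hτ : ∀ k : ℕ, τ k = c * (φ k) ^ 2 * Real.exp (2 * W (2 * (k : ℝ) / (φ k * α))))
    (hx : ∀ k : ℕ, x k = (c / τ k) ^ ((1 : ℝ)/2)) :
    Tendsto τ atTop atTop ∧
    (∀ k : ℕ, 1 ≤ k →
      x k = (φ k * Real.exp (W (2 * (k : ℝ) / (φ k * α))))⁻¹) ∧
    Tendsto x atTop (nhds 0) ∧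
    Tendsto (fun k : ℕ => (k : ℝ) * x k) atTop atTop :=
  tau_k_asymptotics_general c h α hc hh hα W hW φ τ x hφ hτ hx
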